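/- In any turn-based game structure satisfying formulas (1)–(4) of the reduction (which enforce that each grid cell is a four-state gadget whose entry state is a □-state labelled m and exactly one of v₁, v₂, whose two middle states are ○-states labelled m where Player 1 can choose between colours α and β, and whose exit states are ○-states labelled m with neither α nor β that are exactly the states having successors labelled c, v₁ or v₂), the additional formula (5), AG[(m ∧ □) ⇒ [2](⟨∅⟩X³(c ∨ v₁) ∨ ⟨∅⟩X³(c ∨ v₂))], forces every cell gadget to have a single exit state: the α-middle state and the β-middle state of each cell lead to the same exit state. -/

import Mathlib

/-!
# ATL with strategy contexts and memoryless strategies (ATL_sc^0)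

Players and atomic propositions are coded as natural numbers.
-/

/-- A concurrent game structure: states labelled with atomic propositions (coded as
naturals), players coded as naturals, and a transition function assigning to each state
and each tuple of moves (one move per player) a successor state. -/
structure CGS : Type 1 where
  State : Type
  Move : Type
  move_nonempty : Nonempty Move
  label : State → ℕ → Prop
  trans : State → (ℕ → Move) → State

/-- Player `p` controls state `s`: the successor from `s` only depends on `p`'s move. -/
def Controls (G : CGS) (p : ℕ) (s : G.State) : Prop :=
  ∀ mv mv' : ℕ → G.Move, mv p = mv' p → G.trans s mv = G.trans s mv'

/-- A game structure is turn-based if every state is controlled by a single player. -/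
def TurnBased (G : CGS) : Prop := ∀ s : G.State, ∃ p : ℕ, Controls G p s

/-- A (memoryless) strategy context: a partial assignment of memoryless strategies
(functions from states to moves) to players. -/
def Ctx (G : CGS) : Type := ℕ → Option (G.State → G.Move)

/-- The empty strategy context. -/
def emptyCtx (G : CGS) : Ctx G := fun _ => none

/-- `π` is an outcome from state `s` compatible with the memoryless context `ctx`:
at each step, every player to whom `ctx` assigns a strategy plays according to it. -/
def IsOutcome (G : CGS) (ctx : Ctx G) (s : G.State) (π : ℕ → G.State) : Prop :=
  π 0 = s ∧ ∀ i : ℕ, ∃ mv : ℕ → G.Move,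
    (∀ p σ, ctx p = some σ → mv p = σ (π i)) ∧ π (i + 1) = G.trans (π i) mv

/-- Formulas of ATL_sc^0 (with LTL path modalities `X` and `U`); coalitions are
finite lists of players. -/
inductive Formula : Type where
  | atom : ℕ → Formula
  | neg : Formula → Formula
  | conj : Formula → Formula → Formula
  | next : Formula → Formula
  | untl : Formula → Formula → Formula
  | strat : List ℕ → Formula → Formula

/-- Satisfaction of a formula on a path, under a memoryless strategy context.
`strat A φ` (the quantifier `⟨A⟩φ`) assigns new memoryless strategies to the players
of `A`, keeps the strategies of the other players from the current context, and
requires `φ` on all outcomes compatible with the resulting context. -/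
def sat (G : CGS) : Formula → Ctx G → (ℕ → G.State) → Prop
  | .atom p, _, π => G.label (π 0) p
  | .neg φ, ctx, π => ¬ sat G φ ctx π
  | .conj φ ψ, ctx, π => sat G φ ctx π ∧ sat G ψ ctx π
  | .next φ, ctx, π => sat G φ ctx (fun n => π (n + 1))
  | .untl φ ψ, ctx, π => ∃ j : ℕ, sat G ψ ctx (fun n => π (n + j)) ∧
      ∀ k < j, sat G φ ctx (fun n => π (n + k))
  | .strat A φ, ctx, π => ∃ ctx' : Ctx G,
      (∀ p, p ∉ A → ctx' p = ctx p) ∧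
      (∀ p, p ∈ A → ∃ σ, ctx' p = some σ) ∧
      ∀ π' : ℕ → G.State, IsOutcome G ctx' (π 0) π' → sat G φ ctx' π'

/-- A state satisfies a formula (under a given context) if the formula holds on all
outcomes from that state compatible with the context. -/
def StateSatCtx (G : CGS) (ctx : Ctx G) (s : G.State) (φ : Formula) : Prop :=
  ∀ π : ℕ → G.State, IsOutcome G ctx s π → sat G φ ctx π

/-- A state satisfies a formula under the empty strategy context. -/
def StateSat (G : CGS) (s : G.State) (φ : Formula) : Prop :=
  StateSatCtx G (emptyCtx G) s φ

/-- Satisfiability of an ATL_sc^0 formula in a turn-based game structure. -/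
def SatTB (φ : Formula) : Prop :=
  ∃ G : CGS, TurnBased G ∧ ∃ s : G.State, StateSat G s φ

/-- An explicit injective encoding of formulas as natural numbers. -/
def encodeF : Formula → ℕ
  | .atom n => Nat.pair 0 n
  | .neg φ => Nat.pair 1 (encodeF φ)
  | .conj φ ψ => Nat.pair 2 (Nat.pair (encodeF φ) (encodeF ψ))
  | .next φ => Nat.pair 3 (encodeF φ)
  | .untl φ ψ => Nat.pair 4 (Nat.pair (encodeF φ) (encodeF ψ))
  | .strat A φ => Nat.pair 5 (Nat.pair (Encodable.encode A) (encodeF φ))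


namespace Formula

/-- Disjunction. -/
def fOr (φ ψ : Formula) : Formula := neg (conj (neg φ) (neg ψ))
/-- Implication. -/
def fImp (φ ψ : Formula) : Formula := fOr (neg φ) ψ
/-- Bi-implication. -/
def fIff (φ ψ : Formula) : Formula := conj (fImp φ ψ) (fImp ψ φ)
/-- True. -/
def top : Formula := fOr (atom 0) (neg (atom 0))
/-- False. -/
def bot : Formula := neg top
/-- Eventually (`F`). -/
def fut (φ : Formula) : Formula := untl top φ
/-- Globally (`G`). -/
def glob (φ : Formula) : Formula := neg (fut (neg φ))
/-- Weak until (`W`): `G φ ∨ φ U ψ`. -/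
def wuntl (φ ψ : Formula) : Formula := fOr (glob φ) (untl φ ψ)
/-- Finite disjunction. -/
def bigOr (l : List Formula) : Formula := l.foldr fOr bot
/-- Finite conjunction. -/
def bigAnd (l : List Formula) : Formula := l.foldr conj top
/-- Universal path quantification `A`, encoded as `⟨∅⟩`. -/
def Aq (φ : Formula) : Formula := strat [] φ
/-- Existential path quantification `E`. -/
def Eq (φ : Formula) : Formula := neg (Aq (neg φ))
/-- The strategy quantifier `⟨p⟩` for a single player `p`. -/
def D (p : ℕ) (φ : Formula) : Formula := strat [p] φ
/-- The dual quantifier `[p]` over memoryless strategies of player `p`. -/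
def B (p : ℕ) (φ : Formula) : Formula := neg (D p (neg φ))
/-- Two nested next modalities. -/
def X2 (φ : Formula) : Formula := next (next φ)
/-- Three nested next modalities. -/
def X3 (φ : Formula) : Formula := next (X2 φ)
/-- Four nested next modalities. -/
def X4 (φ : Formula) : Formula := next (X3 φ)

end Formula

open Formula

/-! Coding of the atomic propositions `{m, c, v₁, v₂, α, β, □, ○} ∪ T`:
`m ↦ 0`, `c ↦ 1`, `v₁ ↦ 2`, `v₂ ↦ 3`, `α ↦ 4`, `β ↦ 5`, `□ ↦ 6`, `○ ↦ 7`,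
and tile `t ↦ 8 + t`. -/

def pm : Formula := Formula.atom 0
def pc : Formula := Formula.atom 1
def pv1 : Formula := Formula.atom 2
def pv2 : Formula := Formula.atom 3
def pal : Formula := Formula.atom 4
def pbe : Formula := Formula.atom 5
def psq : Formula := Formula.atom 6
def pci : Formula := Formula.atom 7
def ptile (t : ℕ) : Formula := Formula.atom (8 + t)

/-- A tile system: tiles are `0, …, numTiles - 1`, with horizontal and vertical
matching relations given as finite lists of pairs. -/
structure TileSystem : Type where
  numTiles : ℕ
  H : List (ℕ × ℕ)
  V : List (ℕ × ℕ)

/-- The tile system admits a tiling of the quadrant ℕ×ℕ. -/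
def TilesQuadrant (ts : TileSystem) : Prop :=
  ∃ τ : ℕ → ℕ → ℕ, (∀ i j, τ i j < ts.numTiles) ∧
    (∀ i j, (τ i j, τ (i + 1) j) ∈ ts.H) ∧
    (∀ i j, (τ i j, τ i (j + 1)) ∈ ts.V)

/-- An explicit encoding of tile systems as natural numbers. -/
def encodeTS (ts : TileSystem) : ℕ := Encodable.encode (ts.numTiles, ts.H, ts.V)

/-- The list of tiles of a tile system. -/
def tilesOf (ts : TileSystem) : List ℕ := List.range ts.numTiles

/-- The atomic propositions `AP' = {m, c} ∪ T`. -/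
def APprime (ts : TileSystem) : List ℕ := 0 :: 1 :: (tilesOf ts).map (fun t => 8 + t)

/-- The atomic propositions `AP = AP' ∪ {v₁, v₂, α, β, □, ○}`. -/
def APall (ts : TileSystem) : List ℕ := APprime ts ++ [2, 3, 4, 5, 6, 7]

/-- Formula (1): labelling discipline (each state has exactly one proposition of `AP'`),
`A(m W c)`, the shape of choice and tile states, and turn-basedness via
`□ ⇔ ¬○` and `EX p ⇔ ⟨i⟩X p`. -/
def phi1 (ts : TileSystem) : Formula :=
  bigAnd [
    Aq (glob (bigOr ((APprime ts).map fun p =>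
      conj (atom p) (bigAnd (((APprime ts).filter (· ≠ p)).map fun q => neg (atom q)))))),
    Aq (wuntl pm pc),
    Aq (glob (fImp pc (bigAnd [psq,
      bigAnd ((tilesOf ts).map fun t => D 1 (next (ptile t))),
      Aq (next (bigOr ((tilesOf ts).map fun t => Aq (glob (ptile t)))))]))),
    Aq (glob (bigAnd [
      fIff psq (neg pci),
      fImp psq (bigAnd ((APall ts).map fun p =>
        fIff (Eq (next (atom p))) (D 1 (next (atom p))))),
      fImp pci (bigAnd ((APall ts).map fun p =>
        fIff (Eq (next (atom p))) (D 2 (next (atom p)))))]))]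

/-- Formula (2): the four-state cell gadgets: entry `□`-states labelled `m` and
exactly one of `v₁, v₂`, middle `○`-states coloured `α` or `β` by Player 1,
exit `○`-states with neither colour. -/
def phi2 (_ts : TileSystem) : Formula :=
  bigAnd [
    Aq (glob (fImp pm (fOr (bigAnd [psq, neg pal, neg pbe])
      (conj pci (neg (conj pal pbe)))))),
    Aq (glob (conj (fImp (conj pm psq) (fIff pv1 (neg pv2)))
      (fImp (fOr pv1 pv2) (conj pm psq)))),
    Aq (glob (fImp (conj pm psq) (bigAnd [
      Aq (next (bigAnd [pm, pci, fOr pal pbe,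
        Aq (next (bigAnd [pm, pci, neg pal, neg pbe]))])),
      D 1 (next pal),
      D 1 (next pbe)])))]

/-- Formula (3): constraints on transitions leaving a cell. -/
def phi3 (_ts : TileSystem) : Formula :=
  bigAnd [
    Aq (glob (fImp (bigOr [Eq (next pc), Eq (next pv1), Eq (next pv2)])
      (bigAnd [pm, pci, neg pal, neg pbe]))),
    Aq (glob (fImp (bigAnd [pm, pci, neg pal, neg pbe])
      (bigAnd [Eq (next pc), Eq (next pv1), Eq (next pv2),
        Aq (next (bigOr [pc, pv1, pv2]))])))]

/-- Formula (4): the tiling constraints, under a memoryless strategy of Player 1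
choosing a tile for each cell (distances adapted to the four-state cell gadget). -/
def phi4 (ts : TileSystem) : Formula :=
  D 1 (glob (bigAnd [
    fImp pv1 (bigOr (ts.H.map fun p =>
      conj (D 2 (X4 (ptile p.1))) (D 2 (X3 (conj pv2 (X4 (ptile p.2))))))),
    fImp pv2 (bigOr (ts.H.map fun p =>
      conj (D 2 (X4 (ptile p.1))) (D 2 (X3 (conj pv1 (X4 (ptile p.2))))))),
    fImp pv1 (bigOr (ts.V.map fun p =>
      conj (D 2 (X4 (ptile p.1))) (D 2 (X3 (conj pv1 (X4 (ptile p.2))))))),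
    fImp pv2 (bigOr (ts.V.map fun p =>
      conj (D 2 (X4 (ptile p.1))) (D 2 (X3 (conj pv2 (X4 (ptile p.2)))))))]))

/-- Formula (5): `AG[(m ∧ □) ⇒ [2](⟨∅⟩X³(c ∨ v₁) ∨ ⟨∅⟩X³(c ∨ v₂))]`,
forcing each cell to have a single exit state. -/
def phi5 : Formula :=
  Aq (glob (fImp (conj pm psq)
    (B 2 (fOr (Aq (X3 (fOr pc pv1))) (Aq (X3 (fOr pc pv2)))))))

/-- Formula (6): `AG[(m ∧ □) ⇒ [1]((⟨2⟩X³(v₁ ∧ Xα) ∧ ⟨2⟩X³(v₂ ∧ Xα)) ⇒ [2]⟨∅⟩X³Xα)]`,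
forcing each cell to have exactly two successor cells. -/
def phi6 : Formula :=
  Aq (glob (fImp (conj pm psq)
    (B 1 (fImp (conj (D 2 (X3 (conj pv1 (next pal)))) (D 2 (X3 (conj pv2 (next pal)))))
      (B 2 (Aq (X3 (next pal))))))))

/-- Formula (7): `[1]⟨∅⟩G[(m ∧ □ ∧ v₁) ⇒ ((⟨2⟩X³(v₁ ∧ [2]X³Xα)) ⇒
(⟨2⟩X³(¬v₁ ∧ X³(¬v₁ ∧ Xα))))]` together with its `v₂`-counterpart, forcing the two
successor cells of every cell to share a common successor cell. -/
def phi7 : Formula :=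
  conj
    (B 1 (Aq (glob (fImp (bigAnd [pm, psq, pv1])
      (fImp (D 2 (X3 (conj pv1 (B 2 (X3 (next pal))))))
        (D 2 (X3 (conj (neg pv1) (X3 (conj (neg pv1) (next pal)))))))))))
    (B 1 (Aq (glob (fImp (bigAnd [pm, psq, pv2])
      (fImp (D 2 (X3 (conj pv2 (B 2 (X3 (next pal))))))
        (D 2 (X3 (conj (neg pv2) (X3 (conj (neg pv2) (next pal)))))))))))

/-- The reduction formula `Φ_{T,H,V}`: the conjunction of formulas (1)–(7), together
with the requirement that the initial state be a square state of a cell of the main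
part. -/
def Phi (ts : TileSystem) : Formula :=
  bigAnd [conj pm psq, phi1 ts, phi2 ts, phi3 ts, phi4 ts, phi5, phi6, phi7]

/-- The atomic propositions occurring in a formula. -/
def atomsOf : Formula → List ℕ
  | .atom n => [n]
  | .neg φ => atomsOf φ
  | .conj φ ψ => atomsOf φ ++ atomsOf ψ
  | .next φ => atomsOf φ
  | .untl φ ψ => atomsOf φ ++ atomsOf ψ
  | .strat _ φ => atomsOf φ

/-- The players occurring (in coalitions) in a formula. -/
def playersOf : Formula → List ℕ
  | .atom _ => []
  | .neg φ => playersOf φ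
  | .conj φ ψ => playersOf φ ++ playersOf ψ
  | .next φ => playersOf φ
  | .untl φ ψ => playersOf φ ++ playersOf ψ
  | .strat A φ => A ++ playersOf φ


/-- One-step successor relation of a game structure. -/
def Step (G : CGS) (s s' : G.State) : Prop := ∃ mv : ℕ → G.Move, G.trans s mv = s'

/-- Three-step successor relation (the entry state of a cell gadget reaches the entry
states of its successor cells, and its choice state, in exactly three steps). -/
def Step3 (G : CGS) (s s' : G.State) : Prop :=
  ∃ x y : G.State, Step G s x ∧ Step G x y ∧ Step G y s'

/-- Reachability in a game structure. -/
def Reach (G : CGS) : G.State → G.State → Prop := Relation.ReflTransGen (Step G)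

/-!
Suppose a cell entry `s` has two-step successors `y₁ ≠ y₂` through middle states `x₁ ≠ x₂`.
By formula (3) each exit `yᵢ` leads to both a `v₁`-entry and a `v₂`-entry of a next cell, so
Player 2 can play memorylessly along `s x₁ y₁ z₁` with `z₁` a `v₂`-entry and along `s x₂ y₂ z₂`
with `z₂` a `v₁`-entry: `s` is controlled by Player 1 (otherwise Player 1 could not choose the
colour of the next state), and middle states are coloured while exits are not. By formulas (1)
and (2) a `v₂`-entry satisfies neither `c` nor `v₁`, and symmetrically, so both disjuncts of
formula (5) fail for this strategy. When `x₁ = x₂`, compare both routes with one through a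
second middle state, which exists because the `α`- and `β`-successors Player 1 can force differ.
-/

section Outcomes

variable {G : CGS} {s : G.State}

def singleCtx (p : ℕ) (σ : G.State → G.Move) : Ctx G :=
  fun q => if q = p then some σ else none

def CompatStep (ctx : Ctx G) (u v : G.State) : Prop :=
  ∃ mv : ℕ → G.Move, (∀ p σ, ctx p = some σ → mv p = σ u) ∧ v = G.trans u mv

theorem CompatStep.step {ctx : Ctx G} {u v : G.State} (h : CompatStep ctx u v) : Step G u v :=
  let ⟨mv, _, h⟩ := h; ⟨mv, h.symm⟩

theorem compatStep_emptyCtx {u v : G.State} : CompatStep (emptyCtx G) u v ↔ Step G u v := by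
  simp [CompatStep, Step, emptyCtx, eq_comm]

theorem compatStep_singleCtx {p : ℕ} {σ : G.State → G.Move} {u v : G.State} :
    CompatStep (singleCtx p σ) u v ↔ ∃ mv : ℕ → G.Move, mv p = σ u ∧ G.trans u mv = v := by
  simp [CompatStep, singleCtx, eq_comm]

theorem Controls.compatStep_singleCtx {q p : ℕ} {x : G.State} (hc : Controls G q s)
    (hqp : q ≠ p) (σ : G.State → G.Move) (hx : Step G s x) :
    CompatStep (singleCtx p σ) s x := by
  obtain ⟨mv, rfl⟩ := hx
  exact _root_.compatStep_singleCtx.2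
    ⟨Function.update mv p (σ s), Function.update_self .., hc _ _ (Function.update_of_ne hqp ..)⟩

theorem exists_step (u : G.State) : ∃ v, Step G u v :=
  ⟨_, fun _ => G.move_nonempty.some, rfl⟩

theorem exists_compatStep (ctx : Ctx G) (u : G.State) : ∃ v, CompatStep ctx u v :=
  ⟨_, fun p => (ctx p).elim G.move_nonempty.some (· u), fun p σ h => by simp [h], rfl⟩

theorem IsOutcome.step {ctx : Ctx G} {π : ℕ → G.State} (hπ : IsOutcome G ctx s π) :
    CompatStep ctx s (π 1) :=
  hπ.1 ▸ hπ.2 0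

theorem IsOutcome.cons {ctx : Ctx G} {u v : G.State} {π : ℕ → G.State}
    (h : CompatStep ctx u v) (hπ : IsOutcome G ctx v π) :
    IsOutcome G ctx u (Stream'.cons u π) := by
  refine ⟨rfl, fun i => ?_⟩
  cases i with
  | zero => show CompatStep ctx u (π 0); rwa [hπ.1]
  | succ n => exact hπ.2 n

theorem exists_isOutcome (ctx : Ctx G) (s : G.State) : ∃ π, IsOutcome G ctx s π := by
  choose next hnext using exists_compatStep ctx
  refine ⟨fun n => next^[n] s, rfl, fun i => ?_⟩
  show CompatStep ctx _ _
  simpa only [Function.iterate_succ_apply'] using hnext _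

theorem exists_isOutcome_of_compatStep {ctx : Ctx G} {u v : G.State} (h : CompatStep ctx u v) :
    ∃ π, IsOutcome G ctx u π ∧ π 1 = v := by
  obtain ⟨π, hπ⟩ := exists_isOutcome ctx v
  exact ⟨_, hπ.cons h, hπ.1⟩

theorem exists_isOutcome_of_compatSteps {ctx : Ctx G} {u₀ u₁ u₂ u₃ : G.State}
    (h₀ : CompatStep ctx u₀ u₁) (h₁ : CompatStep ctx u₁ u₂) (h₂ : CompatStep ctx u₂ u₃) :
    ∃ π, IsOutcome G ctx u₀ π ∧ π 3 = u₃ := by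
  obtain ⟨π, hπ, hπ₁⟩ := exists_isOutcome_of_compatStep h₂
  exact ⟨_, (hπ.cons h₁).cons h₀, hπ₁⟩

theorem forall_compatStep_of_forall_isOutcome {ctx : Ctx G} {P : G.State → Prop}
    (h : ∀ π, IsOutcome G ctx s π → P (π 1)) : ∀ x, CompatStep ctx s x → P x := by
  intro x hx
  obtain ⟨π, hπ, rfl⟩ := exists_isOutcome_of_compatStep hx
  exact h π hπ

theorem IsOutcome.exists_of_reach {s0 : G.State} (hr : Reach G s0 s) {π : ℕ → G.State}
    (hπ : IsOutcome G (emptyCtx G) s π) :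
    ∃ ρ, IsOutcome G (emptyCtx G) s0 ρ ∧ ∃ k, (fun n => ρ (n + k)) = π := by
  induction hr using Relation.ReflTransGen.head_induction_on with
  | refl => exact ⟨π, hπ, 0, rfl⟩
  | head hstep _ ih =>
    obtain ⟨ρ, hρ, k, rfl⟩ := ih
    exact ⟨_, hρ.cons (compatStep_emptyCtx.2 hstep), k + 1, rfl⟩

/-- `M` separates the middle states `xᵢ` from the exit states `yᵢ`, so that a single memoryless
strategy can prescribe the move at all four of them. -/
theorem exists_strategy_routes {p q : ℕ} (hq : Controls G q s) (hqp : q ≠ p)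
    (M : G.State → Prop) {x₁ x₂ y₁ y₂ z₁ z₂ : G.State}
    (hx₁ : Step G s x₁) (hy₁ : Step G x₁ y₁) (hz₁ : Step G y₁ z₁)
    (hx₂ : Step G s x₂) (hy₂ : Step G x₂ y₂) (hz₂ : Step G y₂ z₂)
    (hx : x₁ ≠ x₂) (hy : y₁ ≠ y₂) (hMx₁ : M x₁) (hMx₂ : M x₂) (hMy₁ : ¬ M y₁) (hMy₂ : ¬ M y₂) :
    ∃ σ : G.State → G.Move, (∃ π, IsOutcome G (singleCtx p σ) s π ∧ π 3 = z₁) ∧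
      ∃ π, IsOutcome G (singleCtx p σ) s π ∧ π 3 = z₂ := by
  classical
  obtain ⟨w₁, rfl⟩ := hy₁
  obtain ⟨w₂, rfl⟩ := hy₂
  obtain ⟨u₁, rfl⟩ := hz₁
  obtain ⟨u₂, rfl⟩ := hz₂
  let σ : G.State → G.Move := fun t =>
    if M t then (if t = x₁ then w₁ p else w₂ p) else (if t = G.trans x₁ w₁ then u₁ p else u₂ p)
  have hstep : ∀ {t : G.State} {mv : ℕ → G.Move}, σ t = mv p →
      CompatStep (singleCtx p σ) t (G.trans t mv) :=
    fun h => compatStep_singleCtx.2 ⟨_, h.symm, rfl⟩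
  refine ⟨σ, exists_isOutcome_of_compatSteps (hq.compatStep_singleCtx hqp σ hx₁) (hstep ?_)
    (hstep ?_), exists_isOutcome_of_compatSteps (hq.compatStep_singleCtx hqp σ hx₂) (hstep ?_)
    (hstep ?_)⟩ <;> simp [σ, hMx₁, hMx₂, hMy₁, hMy₂, hx.symm, hy.symm]

end Outcomes

section Semantics

variable {G : CGS} {ctx : Ctx G} {π : ℕ → G.State} {φ ψ : Formula}

@[simp] theorem sat_top : sat G top ctx π := fun h => h.2 h.1

@[simp] theorem sat_fOr : sat G (fOr φ ψ) ctx π ↔ sat G φ ctx π ∨ sat G ψ ctx π := by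
  simp only [fOr, sat]; tauto

@[simp] theorem sat_fImp : sat G (fImp φ ψ) ctx π ↔ (sat G φ ctx π → sat G ψ ctx π) := by
  simp only [fImp, sat_fOr, sat]; tauto

@[simp] theorem sat_fIff : sat G (fIff φ ψ) ctx π ↔ (sat G φ ctx π ↔ sat G ψ ctx π) := by
  simp only [fIff, sat, sat_fImp]; tauto

theorem sat_bigAnd {l : List Formula} : sat G (bigAnd l) ctx π ↔ ∀ φ ∈ l, sat G φ ctx π := by
  induction l with
  | nil => simp [bigAnd]
  | cons a l ih => simp_all [bigAnd, sat]

theorem sat_bigOr {l : List Formula} : sat G (bigOr l) ctx π ↔ ∃ φ ∈ l, sat G φ ctx π := by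
  induction l with
  | nil => simp [bigOr, bot, sat]
  | cons a l ih => simp_all [bigOr]

theorem sat_Aq : sat G (Aq φ) ctx π ↔ ∀ π', IsOutcome G ctx (π 0) π' → sat G φ ctx π' := by
  constructor
  · rintro ⟨ctx', hctx', -, h⟩
    obtain rfl : ctx' = ctx := funext fun p => hctx' p List.not_mem_nil
    exact h
  · exact fun h => ⟨ctx, fun _ _ => rfl, fun _ hp => absurd hp List.not_mem_nil, h⟩

theorem sat_Eq :
    sat G (Formula.Eq φ) ctx π ↔ ∃ π', IsOutcome G ctx (π 0) π' ∧ sat G φ ctx π' := by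
  simp [Formula.Eq, sat, sat_Aq]

theorem sat_glob : sat G (glob φ) ctx π ↔ ∀ j, sat G φ ctx (fun n => π (n + j)) := by
  simp [glob, fut, sat]

theorem sat_D_emptyCtx {p : ℕ} : sat G (D p φ) (emptyCtx G) π ↔
    ∃ σ, ∀ π', IsOutcome G (singleCtx p σ) (π 0) π' → sat G φ (singleCtx p σ) π' := by
  constructor
  · rintro ⟨ctx', hout, hin, h⟩
    obtain ⟨σ, hσ⟩ := hin p (List.mem_singleton_self p)
    obtain rfl : ctx' = singleCtx p σ := funext fun q => by
      by_cases hq : q = p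
      · simpa [singleCtx, hq] using hσ
      · simpa [singleCtx, hq, emptyCtx] using hout q (by simpa using hq)
    exact ⟨σ, h⟩
  · rintro ⟨σ, h⟩
    exact ⟨singleCtx p σ, fun q hq => by simp_all [singleCtx, emptyCtx],
      fun q hq => ⟨σ, by simp_all [singleCtx]⟩, h⟩

theorem sat_B_emptyCtx {p : ℕ} : sat G (B p φ) (emptyCtx G) π ↔
    ∀ σ, ∃ π', IsOutcome G (singleCtx p σ) (π 0) π' ∧ sat G φ (singleCtx p σ) π' := by
  simp [B, sat, sat_D_emptyCtx]

end Semantics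

section Reachable

variable {G : CGS} {s0 s : G.State} {ψ : Formula}

theorem StateSat.of_mem_bigAnd {l : List Formula} (h : StateSat G s (bigAnd l)) (hψ : ψ ∈ l) :
    StateSat G s ψ :=
  fun π hπ => sat_bigAnd.1 (h π hπ) ψ hψ

theorem StateSat.of_always_of_reach (h : StateSat G s0 (Aq (glob ψ))) (hr : Reach G s0 s) :
    StateSat G s ψ := by
  intro π hπ
  obtain ⟨ρ, hρ, k, rfl⟩ := hπ.exists_of_reach hr
  exact sat_glob.1 (sat_Aq.1 (h ρ hρ) ρ (hρ.1 ▸ hρ)) k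

theorem StateSat.exists_sat (h : StateSat G s ψ) : ∃ π, π 0 = s ∧ sat G ψ (emptyCtx G) π := by
  obtain ⟨π, hπ⟩ := exists_isOutcome (emptyCtx G) s
  exact ⟨π, hπ.1, h π hπ⟩

end Reachable

section Reduction

variable {G : CGS} {ts : TileSystem} {s0 s : G.State}

theorem not_label_c_of_label_m (h1 : StateSat G s0 (phi1 ts)) (hr : Reach G s0 s)
    (hm : G.label s 0) : ¬ G.label s 1 := by
  obtain ⟨π, hπ, h⟩ := ((h1.of_mem_bigAnd (.head _)).of_always_of_reach hr).exists_sat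
  obtain ⟨φ, hφ, hsat⟩ := sat_bigOr.1 h
  obtain ⟨p, -, rfl⟩ := List.mem_map.1 hφ
  have hp : ∀ q ∈ APprime ts, q ≠ p → ¬ G.label s q := fun q hq hqp =>
    hπ ▸ sat_bigAnd.1 hsat.2 _ (List.mem_map_of_mem (List.mem_filter.2 ⟨hq, by simpa using hqp⟩))
  by_cases hp0 : p = 0
  · exact hp 1 (by simp [APprime]) (hp0 ▸ one_ne_zero)
  · exact fun _ => hp 0 (by simp [APprime]) (Ne.symm hp0) hm

theorem not_label_alpha_and_beta (h2 : StateSat G s0 (phi2 ts)) (hr : Reach G s0 s)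
    (hm : G.label s 0) : ¬ (G.label s 4 ∧ G.label s 5) := by
  obtain ⟨π, hπ, h⟩ := ((h2.of_mem_bigAnd (.head _)).of_always_of_reach hr).exists_sat
  simp only [pm, psq, pal, pbe, pci, sat_fImp, sat, hπ, sat_fOr, sat_bigAnd, List.mem_cons,
    List.not_mem_nil, or_false, forall_eq_or_imp, forall_eq, not_and] at h
  tauto

theorem not_label_c_and_v1_iff_not_v2 (h1 : StateSat G s0 (phi1 ts))
    (h2 : StateSat G s0 (phi2 ts)) (hr : Reach G s0 s) (hv : G.label s 2 ∨ G.label s 3) :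
    ¬ G.label s 1 ∧ (G.label s 2 ↔ ¬ G.label s 3) := by
  obtain ⟨π, hπ, h⟩ :=
    ((h2.of_mem_bigAnd (.tail _ (.head _))).of_always_of_reach hr).exists_sat
  simp only [sat, pm, psq, pv1, pv2, sat_fImp, hπ, sat_fIff, and_imp, sat_fOr] at h
  obtain ⟨hm, hsq⟩ := h.2 hv
  exact ⟨not_label_c_of_label_m h1 hr hm, h.1 hm hsq⟩

theorem cell_successors_labels (h2 : StateSat G s0 (phi2 ts)) (hr : Reach G s0 s)
    (hm : G.label s 0) (hsq : G.label s 6) :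
    ∀ x, Step G s x → (G.label x 0 ∧ G.label x 7 ∧ (G.label x 4 ∨ G.label x 5)) ∧
      ∀ y, Step G x y → G.label y 0 ∧ G.label y 7 ∧ ¬ G.label y 4 ∧ ¬ G.label y 5 := by
  obtain ⟨π, hπ, h⟩ :=
    ((h2.of_mem_bigAnd (.tail _ (.tail _ (.head _)))).of_always_of_reach hr).exists_sat
  simp only [pm, psq, pci, pal, pbe, sat_fImp, sat, hπ, hm, hsq, and_self, sat_bigAnd,
    List.mem_cons, List.not_mem_nil, or_false, forall_eq_or_imp, sat_Aq, zero_add, sat_fOr,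
    forall_eq, forall_const] at h
  intro x hx
  obtain ⟨π', hπ', rfl⟩ := exists_isOutcome_of_compatStep (compatStep_emptyCtx.2 hx)
  obtain ⟨hx0, hx7, hxc, hy⟩ := h.1 π' hπ'
  refine ⟨⟨hx0, hx7, hxc⟩, fun y hxy => ?_⟩
  obtain ⟨π'', hπ'', rfl⟩ := exists_isOutcome_of_compatStep (compatStep_emptyCtx.2 hxy)
  exact hy π'' hπ''

theorem exists_strategy_next_alpha_and_beta (h2 : StateSat G s0 (phi2 ts))
    (hr : Reach G s0 s) (hm : G.label s 0) (hsq : G.label s 6) :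
    (∃ σ, ∀ x, CompatStep (singleCtx 1 σ) s x → G.label x 4) ∧
      ∃ σ, ∀ x, CompatStep (singleCtx 1 σ) s x → G.label x 5 := by
  obtain ⟨π, hπ, h⟩ :=
    ((h2.of_mem_bigAnd (.tail _ (.tail _ (.head _)))).of_always_of_reach hr).exists_sat
  simp only [pm, psq, pci, pal, pbe, sat_fImp, sat, hπ, hm, hsq, and_self, sat_bigAnd,
    List.mem_cons, List.not_mem_nil, or_false, forall_eq_or_imp, sat_D_emptyCtx, zero_add,
    forall_eq, forall_const] at h
  exact ⟨h.2.1.imp fun _ => forall_compatStep_of_forall_isOutcome,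
    h.2.2.imp fun _ => forall_compatStep_of_forall_isOutcome⟩

theorem exists_step_v1_and_v2 (h3 : StateSat G s0 (phi3 ts)) (hr : Reach G s0 s)
    (hm : G.label s 0) (hci : G.label s 7) (hα : ¬ G.label s 4) (hβ : ¬ G.label s 5) :
    (∃ z, Step G s z ∧ G.label z 2) ∧ ∃ z, Step G s z ∧ G.label z 3 := by
  obtain ⟨π, hπ, h⟩ :=
    ((h3.of_mem_bigAnd (.tail _ (.head _))).of_always_of_reach hr).exists_sat
  simp only [pm, pci, pal, pbe, pc, pv1, pv2, sat_fImp, sat_bigAnd, List.mem_cons,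
    List.not_mem_nil, or_false, forall_eq_or_imp, sat, hπ, hm, hci, hα, not_false_eq_true,
    forall_eq, hβ, and_self, sat_Eq, zero_add, forall_const] at h
  obtain ⟨-, ⟨π₁, hπ₁, hv₁⟩, ⟨π₂, hπ₂, hv₂⟩, -⟩ := h
  exact ⟨⟨π₁ 1, hπ₁.step.step, hv₁⟩, ⟨π₂ 1, hπ₂.step.step, hv₂⟩⟩

theorem phi5_dichotomy (h5 : StateSat G s0 phi5) (hr : Reach G s0 s)
    (hm : G.label s 0) (hsq : G.label s 6) (σ : G.State → G.Move) :
    (∀ π, IsOutcome G (singleCtx 2 σ) s π → G.label (π 3) 1 ∨ G.label (π 3) 2) ∨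
      ∀ π, IsOutcome G (singleCtx 2 σ) s π → G.label (π 3) 1 ∨ G.label (π 3) 3 := by
  obtain ⟨π, hπ, h⟩ := (h5.of_always_of_reach hr).exists_sat
  simp only [pm, psq, X3, X2, pc, pv1, pv2, sat_fImp, sat, hπ, hm, hsq, and_self,
    sat_B_emptyCtx, sat_fOr, sat_Aq, zero_add, Nat.reduceAdd, forall_const] at h
  obtain ⟨π', hπ', h'⟩ := h σ
  rwa [hπ'.1] at h'

end Reduction

section Cell

variable {G : CGS} {ts : TileSystem} {s0 s : G.State}

theorem controller_eq_one (h2 : StateSat G s0 (phi2 ts)) (hr : Reach G s0 s)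
    (hm : G.label s 0) (hsq : G.label s 6) {q : ℕ} (hq : Controls G q s) : q = 1 := by
  by_contra hq1
  obtain ⟨⟨σα, hα⟩, σβ, hβ⟩ := exists_strategy_next_alpha_and_beta h2 hr hm hsq
  obtain ⟨x, hx⟩ := exists_step s
  exact not_label_alpha_and_beta h2 (hr.tail hx) (cell_successors_labels h2 hr hm hsq x hx).1.1
    ⟨hα x (hq.compatStep_singleCtx hq1 σα hx), hβ x (hq.compatStep_singleCtx hq1 σβ hx)⟩

theorem exists_step_ne (h2 : StateSat G s0 (phi2 ts)) (hr : Reach G s0 s)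
    (hm : G.label s 0) (hsq : G.label s 6) (x : G.State) : ∃ x', Step G s x' ∧ x' ≠ x := by
  obtain ⟨⟨σα, hα⟩, σβ, hβ⟩ := exists_strategy_next_alpha_and_beta h2 hr hm hsq
  obtain ⟨xα, hxα⟩ := exists_compatStep (singleCtx 1 σα) s
  obtain ⟨xβ, hxβ⟩ := exists_compatStep (singleCtx 1 σβ) s
  have hne : xα ≠ xβ := by
    rintro rfl
    exact not_label_alpha_and_beta h2 (hr.tail hxα.step)
      (cell_successors_labels h2 hr hm hsq _ hxα.step).1.1 ⟨hα _ hxα, hβ _ hxβ⟩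
  by_cases h : xα = x
  · exact ⟨xβ, hxβ.step, h ▸ hne.symm⟩
  · exact ⟨xα, hxα.step, h⟩

theorem exit_eq_of_middle_ne (hTB : TurnBased G) (h1 : StateSat G s0 (phi1 ts))
    (h2 : StateSat G s0 (phi2 ts)) (h3 : StateSat G s0 (phi3 ts)) (h5 : StateSat G s0 phi5)
    (hr : Reach G s0 s) (hm : G.label s 0) (hsq : G.label s 6) {x₁ x₂ y₁ y₂ : G.State}
    (hx₁ : Step G s x₁) (hy₁ : Step G x₁ y₁) (hx₂ : Step G s x₂) (hy₂ : Step G x₂ y₂)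
    (hx : x₁ ≠ x₂) : y₁ = y₂ := by
  by_contra hy
  obtain ⟨⟨-, -, hx₁c⟩, hexit₁⟩ := cell_successors_labels h2 hr hm hsq x₁ hx₁
  obtain ⟨⟨-, -, hx₂c⟩, hexit₂⟩ := cell_successors_labels h2 hr hm hsq x₂ hx₂
  obtain ⟨hy₁m, hy₁o, hy₁α, hy₁β⟩ := hexit₁ y₁ hy₁
  obtain ⟨hy₂m, hy₂o, hy₂α, hy₂β⟩ := hexit₂ y₂ hy₂
  have hry₁ : Reach G s0 y₁ := (hr.tail hx₁).tail hy₁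
  have hry₂ : Reach G s0 y₂ := (hr.tail hx₂).tail hy₂
  obtain ⟨-, z₁, hz₁, hz₁v₂⟩ := exists_step_v1_and_v2 h3 hry₁ hy₁m hy₁o hy₁α hy₁β
  obtain ⟨⟨z₂, hz₂, hz₂v₁⟩, -⟩ := exists_step_v1_and_v2 h3 hry₂ hy₂m hy₂o hy₂α hy₂β
  have hz₁l := not_label_c_and_v1_iff_not_v2 h1 h2 (hry₁.tail hz₁) (.inr hz₁v₂)
  have hz₂l := not_label_c_and_v1_iff_not_v2 h1 h2 (hry₂.tail hz₂) (.inl hz₂v₁)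
  obtain ⟨q, hq⟩ := hTB s
  obtain rfl := controller_eq_one h2 hr hm hsq hq
  obtain ⟨σ, ⟨π₁, hπ₁, rfl⟩, π₂, hπ₂, rfl⟩ := exists_strategy_routes hq (p := 2) (by decide)
    (fun t => G.label t 4 ∨ G.label t 5) hx₁ hy₁ hz₁ hx₂ hy₂ hz₂ hx hy hx₁c hx₂c
    (by tauto) (by tauto)
  rcases phi5_dichotomy h5 hr hm hsq σ with h | h
  · have := h π₁ hπ₁; tauto
  · have := h π₂ hπ₂; tauto

theorem exit_eq (hTB : TurnBased G) (h1 : StateSat G s0 (phi1 ts))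
    (h2 : StateSat G s0 (phi2 ts)) (h3 : StateSat G s0 (phi3 ts)) (h5 : StateSat G s0 phi5)
    (hr : Reach G s0 s) (hm : G.label s 0) (hsq : G.label s 6) {x₁ x₂ y₁ y₂ : G.State}
    (hx₁ : Step G s x₁) (hy₁ : Step G x₁ y₁) (hx₂ : Step G s x₂) (hy₂ : Step G x₂ y₂) :
    y₁ = y₂ := by
  by_cases hx : x₁ = x₂
  · subst hx
    obtain ⟨x', hx', hne⟩ := exists_step_ne h2 hr hm hsq x₁
    obtain ⟨y', hy'⟩ := exists_step x'
    exact (exit_eq_of_middle_ne hTB h1 h2 h3 h5 hr hm hsq hx₁ hy₁ hx' hy' hne.symm).trans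
      (exit_eq_of_middle_ne hTB h1 h2 h3 h5 hr hm hsq hx' hy' hx₁ hy₂ hne)
  · exact exit_eq_of_middle_ne hTB h1 h2 h3 h5 hr hm hsq hx₁ hy₁ hx₂ hy₂ hx

end Cell

theorem formula5_forces_unique_exit_general (ts : TileSystem) (G : CGS) (s0 : G.State)
    (hTB : TurnBased G)
    (h1 : StateSat G s0 (phi1 ts)) (h2 : StateSat G s0 (phi2 ts))
    (h3 : StateSat G s0 (phi3 ts))
    (h5 : StateSat G s0 phi5) :
    ∀ s, Reach G s0 s → G.label s 0 → G.label s 6 →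
      ∃ e : G.State, ∀ x, Step G s x → ∀ y, Step G x y → y = e := by
  intro s hr hm hsq
  obtain ⟨x, hx⟩ := exists_step s
  obtain ⟨e, he⟩ := exists_step x
  exact ⟨e, fun x' hx' y hy => exit_eq hTB h1 h2 h3 h5 hr hm hsq hx' hy hx he⟩

/-- **Theorem.** In any turn-based game structure satisfying formulas (1)–(4) of the
reduction, the additional formula (5), `AG[(m ∧ □) ⇒ [2](⟨∅⟩X³(c ∨ v₁) ∨ ⟨∅⟩X³(c ∨ v₂))]`,
forces every cell gadget to have a single exit state: from the entry state of each
cell (a reachable state labelled `m` and `□`), the `α`-middle state and the `β`-middle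
state lead to the same exit state. -/
theorem formula5_forces_unique_exit (ts : TileSystem) (G : CGS) (s0 : G.State)
    (hTB : TurnBased G)
    (h1 : StateSat G s0 (phi1 ts)) (h2 : StateSat G s0 (phi2 ts))
    (h3 : StateSat G s0 (phi3 ts)) (h4 : StateSat G s0 (phi4 ts))
    (h5 : StateSat G s0 phi5) :
    ∀ s, Reach G s0 s → G.label s 0 → G.label s 6 →
      ∃ e : G.State, ∀ x, Step G s x → ∀ y, Step G x y → y = e :=
  formula5_forces_unique_exit_general ts G s0 hTB h1 h2 h3 h5
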